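/- Let a and b be distinct points in the plane, let x be the reflection of a over the perpendicular bisector of b and c (where c is a third point not on line ab), and suppose a and b lie strictly on the same side of B(b,c). Then the segment (or line) through a and x is parallel to the line through b and c, and the angle ∠xbc is strictly smaller than the angle ∠abc. -/

import Mathlib

/-! The reflection `σ` in the perpendicular bisector of `bc` swaps `b` and `c`, and `x - a` is
normal to the mirror, i.e. parallel to `c - b`. Being an isometry, `σ` maps the angle `∠acb` to
`∠xbc`, so the claim is that `∠acb < ∠abc` in the triangle `abc`: the smaller angle lies opposite
the smaller side `ab < ac`. -/

open EuclideanGeometry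

instance (b c : EuclideanSpace ℝ (Fin 2)) :
    Nonempty (AffineSubspace.perpBisector b c) :=
  ⟨⟨midpoint ℝ b c, AffineSubspace.midpoint_mem_perpBisector b c⟩⟩

namespace EuclideanGeometry

variable {V P : Type*} [NormedAddCommGroup V] [InnerProductSpace ℝ V] [MetricSpace P]
  [NormedAddTorsor V P]

theorem reflection_vsub_self_mem_direction_orthogonal (s : AffineSubspace ℝ P) [Nonempty s]
    [s.direction.HasOrthogonalProjection] (p : P) : reflection s p -ᵥ p ∈ s.directionᗮ := by
  rw [reflection_apply', vadd_vsub_assoc]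
  have h := orthogonalProjection_vsub_mem_direction_orthogonal s p
  exact Submodule.add_mem _ h h

section PerpBisector

variable (p₁ p₂ : P)

theorem direction_perpBisector_orthogonal :
    (AffineSubspace.perpBisector p₁ p₂).directionᗮ = ℝ ∙ (p₂ -ᵥ p₁) := by
  rw [AffineSubspace.direction_perpBisector, Submodule.orthogonal_orthogonal]

variable [Nonempty (AffineSubspace.perpBisector p₁ p₂)]
  [(AffineSubspace.perpBisector p₁ p₂).direction.HasOrthogonalProjection]

theorem reflection_perpBisector_vsub_self_mem_span (p : P) :
    reflection (AffineSubspace.perpBisector p₁ p₂) p -ᵥ p ∈ ℝ ∙ (p₂ -ᵥ p₁) :=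
  direction_perpBisector_orthogonal p₁ p₂ ▸ reflection_vsub_self_mem_direction_orthogonal _ p

theorem reflection_perpBisector_left :
    reflection (AffineSubspace.perpBisector p₁ p₂) p₁ = p₂ := by
  set m := midpoint ℝ p₁ p₂
  have hv : p₁ -ᵥ m ∈ (AffineSubspace.perpBisector p₁ p₂).directionᗮ := by
    rw [direction_perpBisector_orthogonal, left_vsub_midpoint, ← neg_vsub_eq_vsub_rev p₂ p₁]
    exact Submodule.smul_mem _ _ (Submodule.neg_mem _ (Submodule.mem_span_singleton_self _))
  calc reflection (AffineSubspace.perpBisector p₁ p₂) p₁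
      = reflection (AffineSubspace.perpBisector p₁ p₂) ((p₁ -ᵥ m) +ᵥ m) := by rw [vsub_vadd]
    _ = -(p₁ -ᵥ m) +ᵥ m :=
        reflection_orthogonal_vadd (AffineSubspace.midpoint_mem_perpBisector p₁ p₂) hv
    _ = p₂ := by rw [neg_vsub_eq_vsub_rev, midpoint_vsub_left, ← right_vsub_midpoint, vsub_vadd]

theorem reflection_perpBisector_right :
    reflection (AffineSubspace.perpBisector p₁ p₂) p₂ = p₁ := by
  have h := reflection_reflection (AffineSubspace.perpBisector p₁ p₂) p₁
  rwa [reflection_perpBisector_left] at h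

theorem angle_reflection_perpBisector (p : P) :
    ∠ (reflection (AffineSubspace.perpBisector p₁ p₂) p) p₁ p₂ = ∠ p p₂ p₁ := by
  have h := (reflection (AffineSubspace.perpBisector p₁ p₂)).toAffineIsometry.angle_map p p₂ p₁
  rwa [AffineIsometryEquiv.coe_toAffineIsometry, reflection_perpBisector_right,
    reflection_perpBisector_left] at h

end PerpBisector

theorem angle_lt_angle_of_dist_lt {a b c : P} (hc : c ∉ line[ℝ, a, b])
    (h : dist a b < dist a c) : ∠ a c b < ∠ a b c := by
  rcases eq_or_ne a b with rfl | hab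
  · have hac : a ≠ c := dist_pos.1 (dist_nonneg.trans_lt h)
    rw [angle_self_of_ne hac, angle_self_left]
    exact Real.pi_div_two_pos
  · have hcol : ¬Collinear ℝ ({a, b, c} : Set P) := fun hcol =>
      hc (hcol.mem_affineSpan_of_mem_of_ne (by simp) (by simp) (by simp) hab)
    exact (angle_lt_iff_dist_lt hcol).2 h

end EuclideanGeometry

theorem reflection_angle_decreases (a b c x : EuclideanSpace ℝ (Fin 2))
    (hc : c ∉ affineSpan ℝ ({a, b} : Set (EuclideanSpace ℝ (Fin 2))))
    (hside : dist a b < dist a c)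
    (hx : x = EuclideanGeometry.reflection (AffineSubspace.perpBisector b c) a) :
    (∃ t : ℝ, x - a = t • (c - b)) ∧
      EuclideanGeometry.angle x b c < EuclideanGeometry.angle a b c := by
  subst hx
  constructor
  · obtain ⟨t, ht⟩ :=
      Submodule.mem_span_singleton.1 (reflection_perpBisector_vsub_self_mem_span b c a)
    exact ⟨t, ht.symm⟩
  · rw [angle_reflection_perpBisector]
    exact angle_lt_angle_of_dist_lt hc hside
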